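/- arXiv:1912.09990 — 5 statements merged into one kernel-verified Lean document; each statement's English description precedes it below -/
import Mathlib

section
/- Let ν be a probability measure on ℝⁿ with finite second moments, mean μ and covariance Σ, and let P be any d×d real matrix. Then the expected quadratic conjugation of A(w) satisfies ∫ A(w)ᵀ P A(w) dν(w) = Ā₀ᵀ (Σ̃ ⊗ P) Ā₀, where Σ̃ = [[1, μᵀ], [μ, Σ + μμᵀ]]. -/
open MeasureTheory Matrix
open scoped Kronecker

noncomputable section

/-- `A(w) = A₀ + Σᵢ w⁽ⁱ⁾ Aᵢ`. -/
def Amat {n d : ℕ} (A : Fin (n + 1) → Matrix (Fin d) (Fin d) ℝ) (w : Fin n → ℝ) :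
    Matrix (Fin d) (Fin d) ℝ :=
  A 0 + ∑ i : Fin n, w i • A i.succ

/-- `Ā₀`: the `((n+1)d) × d` vertical stacking of `A₀, A₁, …, Aₙ`. -/
def Abar {n d : ℕ} (A : Fin (n + 1) → Matrix (Fin d) (Fin d) ℝ) :
    Matrix (Fin (n + 1) × Fin d) (Fin d) ℝ :=
  Matrix.of fun p j => A p.1 p.2 j

/-- `Σ̃ = [[1, μᵀ], [μ, Σ + μμᵀ]]`. -/
def tildeSigma {n : ℕ} (μ : Fin n → ℝ) (S : Matrix (Fin n) (Fin n) ℝ) :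
    Matrix (Fin (n + 1)) (Fin (n + 1)) ℝ :=
  Matrix.of fun i j =>
    Fin.cases (motive := fun _ => ℝ)
      (Fin.cases (motive := fun _ => ℝ) (1 : ℝ) (fun j' => μ j') j)
      (fun i' => Fin.cases (motive := fun _ => ℝ) (μ i')
        (fun j' => S i' j' + μ i' * μ j') j) i

/-! With `c(w) = (1, w) ∈ ℝⁿ⁺¹` one has `A(w) = ∑ₖ c(w)ₖ Aₖ`, hence
`A(w)ᵀ P A(w) = ∑ₖₗ c(w)ₖ c(w)ₗ Aₖᵀ P Aₗ`, and integrating turns the coefficients into the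
second moments `∫ c(w)ₖ c(w)ₗ dν = Σ̃ₖₗ` (a second moment is the covariance plus the product of
the means). On the other side, `Ā₀ᵀ (M ⊗ P) Ā₀ = ∑ₖₗ Mₖₗ Aₖᵀ P Aₗ` for every matrix `M`. -/

namespace Matrix

variable {R ι m n : Type*} [CommSemiring R] [Fintype ι] [Fintype m]

theorem transpose_sum_smul_mul_mul_sum_smul (c : ι → R) (A : ι → Matrix m n R)
    (P : Matrix m m R) :
    (∑ k, c k • A k)ᵀ * P * ∑ l, c l • A l = ∑ k, ∑ l, (c k * c l) • ((A k)ᵀ * P * A l) := by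
  simp only [transpose_sum, transpose_smul, Matrix.sum_mul, Matrix.mul_sum, Matrix.smul_mul,
    Matrix.mul_smul, Finset.smul_sum, smul_smul]
  rw [Finset.sum_comm]
  exact Finset.sum_congr rfl fun k _ => Finset.sum_congr rfl fun l _ => by rw [mul_comm]

theorem stack_transpose_mul_kronecker_mul_stack [DecidableEq ι] (A : ι → Matrix m n R)
    (M : Matrix ι ι R) (P : Matrix m m R) :
    (of fun p j => A p.1 p.2 j : Matrix (ι × m) n R)ᵀ * (M ⊗ₖ P) *
        (of fun p j => A p.1 p.2 j : Matrix (ι × m) n R)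
      = ∑ k, ∑ l, M k l • ((A k)ᵀ * P * A l) := by
  ext i j
  simp only [Matrix.mul_apply, transpose_apply, kroneckerMap_apply, of_apply,
    Fintype.sum_prod_type, Matrix.sum_apply, Matrix.smul_apply, smul_eq_mul, Finset.sum_mul,
    Finset.mul_sum]
  conv_lhs => enter [2, l]; rw [Finset.sum_comm]
  rw [Finset.sum_comm]
  refine Finset.sum_congr rfl fun k _ => Finset.sum_congr rfl fun l _ =>
    Finset.sum_congr rfl fun b _ => Finset.sum_congr rfl fun a _ => ?_
  ring

end Matrix

theorem Amat_eq_sum_vecCons_smul {n d : ℕ} (A : Fin (n + 1) → Matrix (Fin d) (Fin d) ℝ)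
    (w : Fin n → ℝ) :
    Amat A w = ∑ k, vecCons 1 w k • A k := by
  simp [Amat, Fin.sum_univ_succ]

theorem integral_sum_sum_smul_apply {Ω ι m n : Type*} [MeasurableSpace Ω] [Fintype ι]
    {ν : Measure Ω} (f : ι → ι → Ω → ℝ) (hf : ∀ k l, Integrable (f k l) ν)
    (B : ι → ι → Matrix m n ℝ) (i : m) (j : n) :
    ∫ w, (∑ k, ∑ l, f k l w • B k l) i j ∂ν = ∑ k, ∑ l, (∫ w, f k l w ∂ν) * B k l i j := by
  simp only [Matrix.sum_apply, Matrix.smul_apply, smul_eq_mul]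
  rw [integral_finsetSum _ fun k _ => integrable_finsetSum _ fun l _ => (hf k l).mul_const _]
  refine Finset.sum_congr rfl fun k _ => ?_
  rw [integral_finsetSum _ fun l _ => (hf k l).mul_const _]
  simp only [integral_mul_const]

theorem memLp_two_apply_of_integrable_mul_self {ι : Type*} {ν : Measure (ι → ℝ)}
    (hsq : ∀ i, Integrable (fun w : ι → ℝ => w i * w i) ν) (i : ι) :
    MemLp (fun w : ι → ℝ => w i) 2 ν :=
  (memLp_two_iff_integrable_sq (measurable_pi_apply i).aestronglyMeasurable).2 <| by
    simpa only [sq] using hsq i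

section Moments

variable {n : ℕ} {ν : Measure (Fin n → ℝ)}

theorem integrable_vecCons_mul_vecCons [IsFiniteMeasure ν]
    (hL2 : ∀ i, MemLp (fun w : Fin n → ℝ => w i) 2 ν) (k l : Fin (n + 1)) :
    Integrable (fun w => vecCons 1 w k * vecCons 1 w l) ν := by
  have hcons : ∀ k, MemLp (fun w => vecCons 1 w k) 2 ν := by
    intro k
    induction k using Fin.cases with
    | zero => simpa using memLp_const (1 : ℝ)
    | succ k => simpa using hL2 k
  exact (hcons k).integrable_mul (hcons l)

theorem integral_vecCons_mul_vecCons [IsProbabilityMeasure ν]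
    (hL2 : ∀ i, MemLp (fun w : Fin n → ℝ => w i) 2 ν)
    {μ : Fin n → ℝ} (hμ : ∀ i, μ i = ∫ w, w i ∂ν)
    {Sg : Matrix (Fin n) (Fin n) ℝ} (hSg : ∀ i j, Sg i j = ∫ w, (w i - μ i) * (w j - μ j) ∂ν)
    (k l : Fin (n + 1)) :
    ∫ w, vecCons 1 w k * vecCons 1 w l ∂ν = tildeSigma μ Sg k l := by
  have hmoment : ∀ i j, ∫ w, w i * w j ∂ν = Sg i j + μ i * μ j := by
    intro i j
    have h := ProbabilityTheory.covariance_eq_sub (hL2 i) (hL2 j)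
    simp only [ProbabilityTheory.covariance, ← hμ, ← hSg, Pi.mul_apply] at h
    linarith
  induction k using Fin.cases <;> induction l using Fin.cases <;>
    simp [tildeSigma, hμ, hmoment]

end Moments

theorem stmt0_general {n d : ℕ} (A : Fin (n + 1) → Matrix (Fin d) (Fin d) ℝ)
    (P : Matrix (Fin d) (Fin d) ℝ)
    (ν : Measure (Fin n → ℝ)) [IsProbabilityMeasure ν]
    (hint2 : ∀ i j, Integrable (fun w : Fin n → ℝ => w i * w j) ν)
    (μ : Fin n → ℝ) (hμ : ∀ i, μ i = ∫ w, w i ∂ν)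
    (Sg : Matrix (Fin n) (Fin n) ℝ)
    (hSg : ∀ i j, Sg i j = ∫ w, (w i - μ i) * (w j - μ j) ∂ν) :
    ∀ i j, (∫ w, ((Amat A w)ᵀ * P * Amat A w) i j ∂ν)
      = ((Abar A)ᵀ * (tildeSigma μ Sg ⊗ₖ P) * Abar A) i j := by
  intro i j
  have hL2 := memLp_two_apply_of_integrable_mul_self fun i => hint2 i i
  simp_rw [Amat_eq_sum_vecCons_smul, Matrix.transpose_sum_smul_mul_mul_sum_smul]
  rw [integral_sum_sum_smul_apply _ (integrable_vecCons_mul_vecCons hL2), Abar,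
    Matrix.stack_transpose_mul_kronecker_mul_stack]
  simp only [integral_vecCons_mul_vecCons hL2 hμ hSg, Matrix.sum_apply, Matrix.smul_apply,
    smul_eq_mul]

/-- For a probability measure `ν` on `ℝⁿ` with finite second moments, mean `μ`
and covariance `Σ`, and any `d×d` matrix `P`,
`∫ A(w)ᵀ P A(w) dν(w) = Ā₀ᵀ (Σ̃ ⊗ P) Ā₀` (stated entrywise). -/
theorem stmt0 {n d : ℕ} (A : Fin (n + 1) → Matrix (Fin d) (Fin d) ℝ)
    (P : Matrix (Fin d) (Fin d) ℝ)
    (ν : Measure (Fin n → ℝ)) [IsProbabilityMeasure ν]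
    (hint1 : ∀ i, Integrable (fun w : Fin n → ℝ => w i) ν)
    (hint2 : ∀ i j, Integrable (fun w : Fin n → ℝ => w i * w j) ν)
    (μ : Fin n → ℝ) (hμ : ∀ i, μ i = ∫ w, w i ∂ν)
    (Sg : Matrix (Fin n) (Fin n) ℝ)
    (hSg : ∀ i j, Sg i j = ∫ w, (w i - μ i) * (w j - μ j) ∂ν) :
    ∀ i j, (∫ w, ((Amat A w)ᵀ * P * Amat A w) i j ∂ν)
      = ((Abar A)ᵀ * (tildeSigma μ Sg ⊗ₖ P) * Abar A) i j :=
  stmt0_general A P ν hint2 μ hμ Sg hSg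

end
end

section
/- Let (Ω, F, P) be a probability space, let ν be a probability measure on ℝⁿ with finite second moments, and let 𝒜 : Ω → (sets of probability measures on ℝⁿ with finite second moments) and P̂ : Ω → (symmetric d×d matrices) be maps such that for every ω ∈ Ω, P̂(ω) is positive definite and for every ν' ∈ 𝒜(ω) the matrix P̂(ω) − ∫ A(w)ᵀ P̂(ω) A(w) dν'(w) is positive definite. If the event {ω : ν ∈ 𝒜(ω)} is measurable with P-probability at least 1 − β, then P[{ω : the system x_{k+1} = A(w_k)x_k with i.i.d. disturbances w_k ∼ ν is exponentially mean square stable}] ≥ 1 − β. -/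
open MeasureTheory Matrix Filter

noncomputable section

/-- Second-moment matrices of the autonomous system `x_{k+1} = M(w_k) x_k` driven by i.i.d.
disturbances `w_k ∼ ν`. -/
def Sseq {n d : ℕ} (ν : Measure (Fin n → ℝ))
    (M : (Fin n → ℝ) → Matrix (Fin d) (Fin d) ℝ) (x₀ : Fin d → ℝ) :
    ℕ → Matrix (Fin d) (Fin d) ℝ
  | 0 => Matrix.vecMulVec x₀ x₀
  | k + 1 => Matrix.of fun i j => ∫ w, (M w * Sseq ν M x₀ k * (M w)ᵀ) i j ∂ν

/-- Exponential mean square stability. -/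
def EMSS {n d : ℕ} (ν : Measure (Fin n → ℝ))
    (M : (Fin n → ℝ) → Matrix (Fin d) (Fin d) ℝ) : Prop :=
  ∃ c > (0 : ℝ), ∃ γ ∈ Set.Ioo (0 : ℝ) 1, ∀ (x₀ : Fin d → ℝ) (k : ℕ),
    (Sseq ν M x₀ k).trace ≤ c * γ ^ k * ∑ i, x₀ i ^ 2

/-!
With `L = ∫ A(w)ᵀ P̂ A(w) dν(w)`, the quadratic Lyapunov function `V_k = tr (P̂ S_k)` satisfies
`V_{k+1} = tr (L S_k)`, since `S ↦ ∫ A(w) S A(w)ᵀ dν` and `P ↦ L` are adjoint for the trace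
pairing. As `S_k ⪰ 0`, a Loewner bound `L ⪯ γ P̂` yields `V_{k+1} ≤ γ V_k`; and `P̂ - L ≻ 0`
gives such a bound with `γ < 1`, because `P̂ - L ⪰ m I ⪰ (m / C) P̂` once `m I ⪯ P̂ - L` and
`P̂ ⪯ C I`. Comparing `P̂` with multiples of the identity then turns `V_k ≤ γᵏ V_0` into
exponential mean square stability. This is deterministic: it holds for `ν` as soon as
`ν ∈ 𝒜(ω)` for a single `ω`, so the event `{ν ∈ 𝒜(ω)}` lies inside the event of stability.
-/

open scoped MatrixOrder

section LoewnerOrder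

variable {ι : Type*} [Fintype ι]

theorem Matrix.PosSemidef.trace_mul_nonneg {A B : Matrix ι ι ℝ} (hA : A.PosSemidef)
    (hB : B.PosSemidef) : 0 ≤ (A * B).trace := by
  classical
  obtain ⟨R, rfl⟩ := CStarAlgebra.nonneg_iff_eq_star_mul_self.mp hA.nonneg
  rw [trace_mul_cycle, trace_mul_cycle, star_eq_conjTranspose]
  exact (hB.mul_mul_conjTranspose_same R).trace_nonneg

theorem Matrix.trace_mul_le_trace_mul {A B S : Matrix ι ι ℝ} (hAB : A ≤ B)
    (hS : S.PosSemidef) : (A * S).trace ≤ (B * S).trace := by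
  have := (Matrix.le_iff.mp hAB).trace_mul_nonneg hS
  rwa [sub_mul, trace_sub, sub_nonneg] at this

variable [DecidableEq ι]

theorem Matrix.PosDef.exists_pos_smul_one_le {P : Matrix ι ι ℝ} (hP : P.PosDef) :
    ∃ c > (0 : ℝ), c • (1 : Matrix ι ι ℝ) ≤ P := by
  cases subsingleton_or_nontrivial (Matrix ι ι ℝ)
  · exact ⟨1, one_pos, (Subsingleton.elim _ _).le⟩
  simp_rw [← Algebra.algebraMap_eq_smul_one]
  exact (CFC.exists_pos_algebraMap_le_iff hP.isHermitian).2
    fun _ hx => hP.isStrictlyPositive.spectrum_pos hx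

theorem Matrix.IsHermitian.exists_le_smul_one {P : Matrix ι ι ℝ} (hP : P.IsHermitian) (a : ℝ) :
    ∃ C ≥ a, P ≤ C • (1 : Matrix ι ι ℝ) := by
  obtain ⟨r, hr⟩ :=
    (isCompact_iff_compactSpace.mpr inferInstance : IsCompact (spectrum ℝ P)).bddAbove
  refine ⟨max r a, le_max_right _ _, ?_⟩
  rw [← Algebra.algebraMap_eq_smul_one]
  exact le_algebraMap_of_spectrum_le (fun x hx => (hr hx).trans (le_max_left _ _)) hP

end LoewnerOrder

section EntrywiseIntegral

variable {α ι : Type*} [MeasurableSpace α] {μ : Measure α} [Fintype ι]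

theorem integrable_mul_mul_apply {M N : α → Matrix ι ι ℝ}
    (hM : ∀ i j, MemLp (fun w => M w i j) 2 μ) (hN : ∀ i j, MemLp (fun w => N w i j) 2 μ)
    (B : Matrix ι ι ℝ) (i j : ι) : Integrable (fun w => (M w * B * N w) i j) μ := by
  simp only [mul_apply, Finset.sum_mul]
  refine integrable_finsetSum _ fun q _ => integrable_finsetSum _ fun p _ => ?_
  exact ((hM i p).mul_const (B p q)).integrable_mul (hN q j)

theorem trace_mul_integral {f : α → Matrix ι ι ℝ} (hf : ∀ i j, Integrable (fun w => f w i j) μ)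
    (C : Matrix ι ι ℝ) :
    (C * Matrix.of fun i j => ∫ w, f w i j ∂μ).trace = ∫ w, (C * f w).trace ∂μ := by
  simp only [trace, diag, mul_apply, of_apply, ← integral_const_mul]
  rw [integral_finsetSum]
  · exact Finset.sum_congr rfl fun i _ =>
      (integral_finsetSum _ fun j _ => (hf j i).const_mul _).symm
  · exact fun i _ => integrable_finsetSum _ fun j _ => (hf j i).const_mul _

theorem dotProduct_mulVec_eq_trace (S : Matrix ι ι ℝ) (x : ι → ℝ) :
    x ⬝ᵥ S *ᵥ x = (vecMulVec x x * S).trace := by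
  rw [vecMulVec_mul, trace_vecMulVec, dotProduct_mulVec, dotProduct_comm]

theorem posSemidef_integral {f : α → Matrix ι ι ℝ} (hf : ∀ i j, Integrable (fun w => f w i j) μ)
    (hpos : ∀ w, (f w).PosSemidef) : (Matrix.of fun i j => ∫ w, f w i j ∂μ).PosSemidef := by
  refine .of_dotProduct_mulVec_nonneg ?_ fun x => ?_
  · ext i j
    exact integral_congr_ae (ae_of_all _ fun w => (hpos w).isHermitian.apply i j)
  · rw [star_trivial, dotProduct_mulVec_eq_trace, trace_mul_integral hf]
    refine integral_nonneg fun w => ?_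
    rw [← dotProduct_mulVec_eq_trace]
    simpa using (hpos w).dotProduct_mulVec_nonneg x

end EntrywiseIntegral

section SecondMoments

variable {n d : ℕ} {ν : Measure (Fin n → ℝ)} {M : (Fin n → ℝ) → Matrix (Fin d) (Fin d) ℝ}

def lyapunovOperator (ν : Measure (Fin n → ℝ)) (M : (Fin n → ℝ) → Matrix (Fin d) (Fin d) ℝ)
    (P : Matrix (Fin d) (Fin d) ℝ) : Matrix (Fin d) (Fin d) ℝ :=
  Matrix.of fun i j => ∫ w, ((M w)ᵀ * P * M w) i j ∂ν

variable (hM : ∀ i j, MemLp (fun w => M w i j) 2 ν)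
include hM

theorem posSemidef_Sseq (x₀ : Fin d → ℝ) (k : ℕ) : (Sseq ν M x₀ k).PosSemidef := by
  induction k with
  | zero => simpa [Sseq] using posSemidef_vecMulVec_self_star x₀
  | succ k ih =>
    refine posSemidef_integral
      (integrable_mul_mul_apply (N := fun w => (M w)ᵀ) hM (fun i j => hM j i) _) fun w => ?_
    simpa using ih.mul_mul_conjTranspose_same (M w)

theorem trace_mul_Sseq_succ (P : Matrix (Fin d) (Fin d) ℝ) (x₀ : Fin d → ℝ) (k : ℕ) :
    (P * Sseq ν M x₀ (k + 1)).trace = (lyapunovOperator ν M P * Sseq ν M x₀ k).trace := by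
  rw [Sseq,
    trace_mul_integral (integrable_mul_mul_apply (N := fun w => (M w)ᵀ) hM (fun i j => hM j i) _),
    trace_mul_comm, lyapunovOperator,
    trace_mul_integral (integrable_mul_mul_apply (M := fun w => (M w)ᵀ) (fun i j => hM j i) hM _)]
  refine integral_congr_ae (ae_of_all _ fun w => ?_)
  dsimp only
  rw [trace_mul_comm (Sseq ν M x₀ k), ← Matrix.mul_assoc P, trace_mul_comm _ (M w)ᵀ]
  simp only [Matrix.mul_assoc]

theorem trace_mul_Sseq_le_pow {P : Matrix (Fin d) (Fin d) ℝ} {γ : ℝ} (hγ : 0 ≤ γ)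
    (hLP : lyapunovOperator ν M P ≤ γ • P) (x₀ : Fin d → ℝ) (k : ℕ) :
    (P * Sseq ν M x₀ k).trace ≤ γ ^ k * (P * Sseq ν M x₀ 0).trace := by
  induction k with
  | zero => simp
  | succ k ih =>
    calc (P * Sseq ν M x₀ (k + 1)).trace
        ≤ (γ • P * Sseq ν M x₀ k).trace := by
          rw [trace_mul_Sseq_succ hM]
          exact trace_mul_le_trace_mul hLP (posSemidef_Sseq hM x₀ k)
      _ ≤ γ ^ (k + 1) * (P * Sseq ν M x₀ 0).trace := by
          rw [smul_mul, trace_smul, smul_eq_mul, pow_succ', mul_assoc]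
          exact mul_le_mul_of_nonneg_left ih hγ

theorem emss_of_lyapunov {P : Matrix (Fin d) (Fin d) ℝ} (hP : P.PosDef)
    (hL : (P - lyapunovOperator ν M P).PosDef) : EMSS ν M := by
  obtain ⟨c, hc, hcP⟩ := hP.exists_pos_smul_one_le
  obtain ⟨m, hm, hmL⟩ := hL.exists_pos_smul_one_le
  obtain ⟨C, hCm, hPC⟩ := hP.isHermitian.exists_le_smul_one (2 * m)
  have hC : 0 < C := by linarith
  have hγ : 1 - m / C ∈ Set.Ioo (0 : ℝ) 1 := by
    constructor
    · rw [sub_pos, div_lt_one hC]; linarith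
    · rw [sub_lt_self_iff]; positivity
  have hLP : lyapunovOperator ν M P ≤ (1 - m / C) • P := by
    have hmP : (m / C) • P ≤ P - lyapunovOperator ν M P := calc
      (m / C) • P ≤ (m / C) • C • (1 : Matrix (Fin d) (Fin d) ℝ) :=
        smul_le_smul_of_nonneg_left hPC (by positivity)
      _ = m • 1 := by rw [smul_smul, div_mul_cancel₀ _ hC.ne']
      _ ≤ _ := hmL
    rw [sub_smul, one_smul]
    exact le_sub_comm.mp hmP
  refine ⟨C / c, div_pos hC hc, 1 - m / C, hγ, fun x₀ k => ?_⟩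
  have hS := posSemidef_Sseq hM x₀
  have lower : c * (Sseq ν M x₀ k).trace ≤ (P * Sseq ν M x₀ k).trace := by
    simpa [smul_mul, trace_smul] using trace_mul_le_trace_mul hcP (hS k)
  have upper : (P * Sseq ν M x₀ 0).trace ≤ C * ∑ i, x₀ i ^ 2 := by
    simpa [smul_mul, trace_smul, Sseq, trace_vecMulVec, dotProduct, sq] using
      trace_mul_le_trace_mul hPC (hS 0)
  have decay := trace_mul_Sseq_le_pow hM hγ.1.le hLP x₀ k
  rw [div_mul_eq_mul_div, div_mul_eq_mul_div, le_div_iff₀ hc]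
  calc (Sseq ν M x₀ k).trace * c ≤ (P * Sseq ν M x₀ k).trace := by linarith
    _ ≤ (1 - m / C) ^ k * (C * ∑ i, x₀ i ^ 2) := by
      exact decay.trans (mul_le_mul_of_nonneg_left upper (pow_nonneg hγ.1.le k))
    _ = C * (1 - m / C) ^ k * ∑ i, x₀ i ^ 2 := by ring

end SecondMoments

theorem memLp_Amat_apply {n d : ℕ} {ν : Measure (Fin n → ℝ)} [IsFiniteMeasure ν]
    (A : Fin (n + 1) → Matrix (Fin d) (Fin d) ℝ) (hw : ∀ l, MemLp (fun w : Fin n → ℝ => w l) 2 ν)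
    (i j : Fin d) : MemLp (fun w => Amat A w i j) 2 ν := by
  simp only [Amat, Matrix.add_apply, Matrix.sum_apply, Matrix.smul_apply, smul_eq_mul]
  exact (memLp_const (A 0 i j)).add
    (memLp_finsetSum Finset.univ fun l _ => (hw l).mul_const (A l.succ i j))

theorem stmt2_general {n d : ℕ} {Ω : Type*} [MeasurableSpace Ω]
    (Pr : Measure Ω)
    (A : Fin (n + 1) → Matrix (Fin d) (Fin d) ℝ)
    (ν : Measure (Fin n → ℝ)) [IsProbabilityMeasure ν]
    (hint2 : ∀ i j, Integrable (fun w : Fin n → ℝ => w i * w j) ν)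
    (𝒜 : Ω → Set (Measure (Fin n → ℝ)))
    (Phat : Ω → Matrix (Fin d) (Fin d) ℝ)
    (hPD : ∀ ω, (Phat ω).PosDef)
    (hLyap : ∀ ω, ∀ ν' ∈ 𝒜 ω,
      (Phat ω - Matrix.of fun i j =>
        ∫ w, ((Amat A w)ᵀ * Phat ω * Amat A w) i j ∂ν').PosDef)
    (β : ℝ)
    (hprob : ENNReal.ofReal (1 - β) ≤ Pr {ω | ν ∈ 𝒜 ω}) :
    ENNReal.ofReal (1 - β) ≤ Pr {ω | EMSS ν (Amat A)} := by
  have hw : ∀ l, MemLp (fun w : Fin n → ℝ => w l) 2 ν := fun l =>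
    (memLp_two_iff_integrable_sq (measurable_pi_apply l).aestronglyMeasurable).2
      (by simpa only [sq] using hint2 l l)
  refine hprob.trans (measure_mono fun ω hω => ?_)
  exact emss_of_lyapunov (memLp_Amat_apply A hw) (hPD ω) (hLyap ω ν hω)

/-- distributionally robust Lyapunov stability. If, for every `ω`, every
distribution `ν'` in the ambiguity set `𝒜(ω)` admits `P̂(ω) ≻ 0` as a Lyapunov certificate,
and `ν ∈ 𝒜(ω)` holds with probability at least `1 − β`, then the system driven by `ν` is
exponentially mean square stable with probability at least `1 − β`. -/
theorem stmt2 {n d : ℕ} {Ω : Type*} [MeasurableSpace Ω]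
    (Pr : Measure Ω) [IsProbabilityMeasure Pr]
    (A : Fin (n + 1) → Matrix (Fin d) (Fin d) ℝ)
    (ν : Measure (Fin n → ℝ)) [IsProbabilityMeasure ν]
    (hint1 : ∀ i, Integrable (fun w : Fin n → ℝ => w i) ν)
    (hint2 : ∀ i j, Integrable (fun w : Fin n → ℝ => w i * w j) ν)
    (𝒜 : Ω → Set (Measure (Fin n → ℝ)))
    (Phat : Ω → Matrix (Fin d) (Fin d) ℝ)
    (hamb : ∀ ω, ∀ ν' ∈ 𝒜 ω, IsProbabilityMeasure ν' ∧
      (∀ i, Integrable (fun w : Fin n → ℝ => w i) ν') ∧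
      (∀ i j, Integrable (fun w : Fin n → ℝ => w i * w j) ν'))
    (hPD : ∀ ω, (Phat ω).PosDef)
    (hLyap : ∀ ω, ∀ ν' ∈ 𝒜 ω,
      (Phat ω - Matrix.of fun i j =>
        ∫ w, ((Amat A w)ᵀ * Phat ω * Amat A w) i j ∂ν').PosDef)
    (β : ℝ) (hβ : β ∈ Set.Icc (0 : ℝ) 1)
    (hmeas : MeasurableSet {ω | ν ∈ 𝒜 ω})
    (hprob : ENNReal.ofReal (1 - β) ≤ Pr {ω | ν ∈ 𝒜 ω}) :
    ENNReal.ofReal (1 - β) ≤ Pr {ω | EMSS ν (Amat A)} :=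
  stmt2_general Pr A ν hint2 𝒜 Phat hPD hLyap β hprob

end
end

section
/- Fix x ∈ ℝ^d, u ∈ ℝ^m, a symmetric positive semidefinite P ∈ ℝ^{d×d}, a vector μ ∈ ℝⁿ and a symmetric positive semidefinite matrix Σ_dr ∈ ℝ^{n×n}. Then the supremum, over all probability measures ν' on ℝⁿ with finite second moments, mean μ, and covariance Σ' ⪯ Σ_dr, of ∫ (A(w)x + B(w)u)ᵀ P (A(w)x + B(w)u) dν'(w) equals (A(μ)x + B(μ)u)ᵀ P (A(μ)x + B(μ)u) + (Āx + B̄u)ᵀ (Σ_dr ⊗ P) (Āx + B̄u), where Ā is the vertical stacking of A₁, …, Aₙ and B̄ the vertical stacking of B₁, …, Bₙ; moreover the supremum is attained (e.g. by the Gaussian measure with mean μ and covariance Σ_dr). -/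
/-!
Put `v = A(μ)x + B(μ)u` and `zᵢ = Aᵢx + Bᵢu`, so that `A(w)x + B(w)u = v + Σᵢ (wᵢ - μᵢ) zᵢ`.
For any `ν'` with mean `μ` the linear term integrates to zero, and the expected cost is
`vᵀPv + z̄ᵀ(Σ' ⊗ P)z̄` with `z̄ = Āx + B̄u` the stacked `zᵢ` and `Σ'` the covariance of `ν'`.
As `(Σ_dr - Σ') ⊗ P ⪰ 0`, this is at most the claimed value, which the Gaussian with mean `μ`
and covariance `Σ_dr` attains.
-/

open MeasureTheory Matrix
open scoped Kronecker

noncomputable section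

/-- `B(w) = B₀ + Σᵢ w⁽ⁱ⁾ Bᵢ`. -/
def Bmat {n d m : ℕ} (B : Fin (n + 1) → Matrix (Fin d) (Fin m) ℝ) (w : Fin n → ℝ) :
    Matrix (Fin d) (Fin m) ℝ :=
  B 0 + ∑ i : Fin n, w i • B i.succ

/-- `Ā`: the `(nd) × d` vertical stacking of `A₁, …, Aₙ` (without `A₀`). -/
def AbarTail {n d : ℕ} (A : Fin (n + 1) → Matrix (Fin d) (Fin d) ℝ) :
    Matrix (Fin n × Fin d) (Fin d) ℝ :=
  Matrix.of fun p j => A p.1.succ p.2 j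

/-- `B̄`: the `(nd) × m` vertical stacking of `B₁, …, Bₙ` (without `B₀`). -/
def BbarTail {n d m : ℕ} (B : Fin (n + 1) → Matrix (Fin d) (Fin m) ℝ) :
    Matrix (Fin n × Fin d) (Fin m) ℝ :=
  Matrix.of fun p j => B p.1.succ p.2 j

open ProbabilityTheory WithLp
open scoped MatrixOrder

section QuadraticForm

variable {ι κ R : Type*} [Fintype ι] [Fintype κ] [CommRing R]

lemma add_sum_smul_dotProduct_mulVec (P : Matrix κ κ R) (v : κ → R) (a : ι → R)
    (z : ι → κ → R) :
    (v + ∑ i, a i • z i) ⬝ᵥ P *ᵥ (v + ∑ i, a i • z i) =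
      v ⬝ᵥ P *ᵥ v + ∑ i, a i * (v ⬝ᵥ P *ᵥ z i + z i ⬝ᵥ P *ᵥ v) +
        ∑ i, ∑ j, a i * a j * (z i ⬝ᵥ P *ᵥ z j) := by
  simp only [mulVec_add, mulVec_sum, mulVec_smul, dotProduct_add, add_dotProduct,
    dotProduct_sum, sum_dotProduct, dotProduct_smul, smul_dotProduct, smul_eq_mul,
    mul_add, Finset.sum_add_distrib, Finset.mul_sum]
  rw [Finset.sum_comm (f := fun j i => a j * (a i * (z i ⬝ᵥ P *ᵥ z j)))]
  simp only [← mul_assoc, mul_comm (a _) (a _)]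
  ring

lemma uncurry_dotProduct_kronecker_mulVec (S : Matrix ι ι R) (P : Matrix κ κ R)
    (z : ι → κ → R) :
    Function.uncurry z ⬝ᵥ (S ⊗ₖ P) *ᵥ Function.uncurry z =
      ∑ i, ∑ j, S i j * (z i ⬝ᵥ P *ᵥ z j) := by
  simp only [dotProduct, mulVec, kroneckerMap_apply, Fintype.sum_prod_type,
    Function.uncurry_apply_pair, Finset.mul_sum]
  refine Finset.sum_congr rfl fun i _ => ?_
  rw [Finset.sum_comm]
  exact Finset.sum_congr rfl fun j _ => Finset.sum_congr rfl fun k _ =>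
    Finset.sum_congr rfl fun l _ => by ring

lemma dotProduct_kronecker_mulVec_le {S T : Matrix ι ι ℝ} (hST : S ≤ T) {P : Matrix κ κ ℝ}
    (hP : P.PosSemidef) (y : ι × κ → ℝ) :
    y ⬝ᵥ (S ⊗ₖ P) *ᵥ y ≤ y ⬝ᵥ (T ⊗ₖ P) *ᵥ y := by
  have h := ((Matrix.le_iff.mp hST).kronecker hP).dotProduct_mulVec_nonneg y
  rw [star_trivial] at h
  conv_rhs => rw [← add_sub_cancel S T, add_kronecker, add_mulVec, dotProduct_add]
  exact le_add_of_nonneg_right h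

end QuadraticForm

def covMatrix {ι : Type*} (ν : Measure (ι → ℝ)) (μ : ι → ℝ) : Matrix ι ι ℝ :=
  Matrix.of fun i j => ∫ w, (w i - μ i) * (w j - μ j) ∂ν

section Moments

variable {ι κ : Type*} [Fintype ι] [Fintype κ] {ν : Measure (ι → ℝ)} [IsProbabilityMeasure ν]
  {μ : ι → ℝ}

lemma integral_add_sum_sub_smul_dotProduct_mulVec
    (h1 : ∀ i, Integrable (fun w : ι → ℝ => w i) ν)
    (h2 : ∀ i j, Integrable (fun w : ι → ℝ => w i * w j) ν)
    (hmean : ∀ i, ∫ w, w i ∂ν = μ i) (P : Matrix κ κ ℝ) (v : κ → ℝ) (z : ι → κ → ℝ) :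
    ∫ w, (v + ∑ i, (w i - μ i) • z i) ⬝ᵥ P *ᵥ (v + ∑ i, (w i - μ i) • z i) ∂ν =
      v ⬝ᵥ P *ᵥ v + Function.uncurry z ⬝ᵥ (covMatrix ν μ ⊗ₖ P) *ᵥ Function.uncurry z := by
  have hlin i : Integrable (fun w : ι → ℝ => w i - μ i) ν := (h1 i).sub (integrable_const _)
  have hquad i j : Integrable (fun w : ι → ℝ => (w i - μ i) * (w j - μ j)) ν := by
    have h := (((h2 i j).sub ((h1 i).mul_const (μ j))).sub ((h1 j).mul_const (μ i))).add
      (integrable_const (μ i * μ j))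
    exact h.congr (ae_of_all _ fun w => by simp only [Pi.add_apply, Pi.sub_apply]; ring)
  have hcentered i : ∫ w, (w i - μ i) ∂ν = 0 := by
    rw [integral_sub (h1 i) (integrable_const _), hmean, integral_const, probReal_univ,
      one_smul, sub_self]
  have hL : Integrable (fun w : ι → ℝ =>
      ∑ i, (w i - μ i) * (v ⬝ᵥ P *ᵥ z i + z i ⬝ᵥ P *ᵥ v)) ν :=
    integrable_finsetSum _ fun i _ => (hlin i).mul_const _
  have hQ : Integrable (fun w : ι → ℝ =>
      ∑ i, ∑ j, (w i - μ i) * (w j - μ j) * (z i ⬝ᵥ P *ᵥ z j)) ν :=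
    integrable_finsetSum _ fun i _ => integrable_finsetSum _ fun j _ => (hquad i j).mul_const _
  simp_rw [add_sum_smul_dotProduct_mulVec]
  rw [integral_add ((integrable_const _).fun_add hL) hQ, integral_add (integrable_const _) hL,
    integral_const, integral_finsetSum _ fun i _ => (hlin i).mul_const _,
    integral_finsetSum _ fun i _ => integrable_finsetSum _ fun j _ => (hquad i j).mul_const _,
    uncurry_dotProduct_kronecker_mulVec]
  simp only [integral_mul_const, hcentered, zero_mul, Finset.sum_const_zero, add_zero,
    probReal_univ, one_smul]
  refine congrArg _ (Finset.sum_congr rfl fun i _ => ?_)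
  rw [integral_finsetSum _ fun j _ => (hquad i j).mul_const _]
  simp only [integral_mul_const, covMatrix, of_apply]

end Moments

section Gaussian

variable {ι : Type*} [Fintype ι] [DecidableEq ι]

def multivariateGaussianPi (μ : ι → ℝ) (S : Matrix ι ι ℝ) : Measure (ι → ℝ) :=
  (multivariateGaussian (toLp 2 μ) S).map (MeasurableEquiv.toLp 2 (ι → ℝ)).symm

variable (μ : ι → ℝ)

instance (S : Matrix ι ι ℝ) : IsProbabilityMeasure (multivariateGaussianPi μ S) :=
  Measure.isProbabilityMeasure_map (by fun_prop)

lemma memLp_two_eval_multivariateGaussianPi (S : Matrix ι ι ℝ) (i : ι) :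
    MemLp (fun w : ι → ℝ => w i) 2 (multivariateGaussianPi μ S) := by
  rw [multivariateGaussianPi,
    memLp_map_measure_iff (continuous_apply i).aestronglyMeasurable (by fun_prop)]
  exact (EuclideanSpace.proj i : EuclideanSpace ℝ ι →L[ℝ] ℝ).comp_memLp' IsGaussian.memLp_two_id

lemma integral_eval_multivariateGaussianPi (S : Matrix ι ι ℝ) (i : ι) :
    ∫ w, w i ∂(multivariateGaussianPi μ S) = μ i := by
  rw [multivariateGaussianPi, integral_map_equiv]
  simpa using (EuclideanSpace.proj i : EuclideanSpace ℝ ι →L[ℝ] ℝ).integral_comp_comm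
    (IsGaussian.integrable_id (μ := multivariateGaussian (toLp 2 μ) S))

lemma covMatrix_multivariateGaussianPi {S : Matrix ι ι ℝ} (hS : S.PosSemidef) :
    covMatrix (multivariateGaussianPi μ S) μ = S := by
  ext i j
  have h : cov[fun w => w i, fun w => w j; multivariateGaussianPi μ S] = S i j := by
    rw [multivariateGaussianPi, covariance_map_equiv]
    exact covariance_eval_multivariateGaussian hS i j
  simpa only [covMatrix, of_apply, covariance, integral_eval_multivariateGaussianPi] using h

end Gaussian

section StateSpace

variable {n d m : ℕ} (A : Fin (n + 1) → Matrix (Fin d) (Fin d) ℝ)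
  (B : Fin (n + 1) → Matrix (Fin d) (Fin m) ℝ) (x : Fin d → ℝ) (u : Fin m → ℝ)

lemma Amat_mulVec_add_Bmat_mulVec (μ w : Fin n → ℝ) :
    Amat A w *ᵥ x + Bmat B w *ᵥ u =
      Amat A μ *ᵥ x + Bmat B μ *ᵥ u + ∑ i, (w i - μ i) • (A i.succ *ᵥ x + B i.succ *ᵥ u) := by
  simp only [Amat, Bmat, add_mulVec, sum_mulVec, smul_mulVec, sub_smul, smul_add,
    Finset.sum_sub_distrib, Finset.sum_add_distrib]
  abel

lemma AbarTail_mulVec_add_BbarTail_mulVec :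
    AbarTail A *ᵥ x + BbarTail B *ᵥ u =
      Function.uncurry fun i : Fin n => A i.succ *ᵥ x + B i.succ *ᵥ u := by
  ext ⟨i, k⟩
  simp [AbarTail, BbarTail, mulVec, dotProduct]

lemma integral_Amat_Bmat_dotProduct_mulVec (P : Matrix (Fin d) (Fin d) ℝ)
    {ν : Measure (Fin n → ℝ)} [IsProbabilityMeasure ν] {μ : Fin n → ℝ}
    (h1 : ∀ i, Integrable (fun w : Fin n → ℝ => w i) ν)
    (h2 : ∀ i j, Integrable (fun w : Fin n → ℝ => w i * w j) ν)
    (hmean : ∀ i, ∫ w, w i ∂ν = μ i) :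
    ∫ w, ((Amat A w *ᵥ x + Bmat B w *ᵥ u) ⬝ᵥ P *ᵥ (Amat A w *ᵥ x + Bmat B w *ᵥ u)) ∂ν =
      (Amat A μ *ᵥ x + Bmat B μ *ᵥ u) ⬝ᵥ P *ᵥ (Amat A μ *ᵥ x + Bmat B μ *ᵥ u) +
        (AbarTail A *ᵥ x + BbarTail B *ᵥ u) ⬝ᵥ
          (covMatrix ν μ ⊗ₖ P) *ᵥ (AbarTail A *ᵥ x + BbarTail B *ᵥ u) := by
  rw [AbarTail_mulVec_add_BbarTail_mulVec,
    ← integral_add_sum_sub_smul_dotProduct_mulVec h1 h2 hmean]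
  simp only [← Amat_mulVec_add_Bmat_mulVec A B x u μ]

end StateSpace

/-- The supremum, over probability measures `ν'` with finite second moments,
mean `μ` and covariance `Σ' ⪯ Σ_dr`, of `∫ (A(w)x + B(w)u)ᵀ P (A(w)x + B(w)u) dν'` equals
`(A(μ)x + B(μ)u)ᵀ P (A(μ)x + B(μ)u) + (Āx + B̄u)ᵀ (Σ_dr ⊗ P) (Āx + B̄u)`, and it is attained. -/
theorem stmt8 {n d m : ℕ}
    (A : Fin (n + 1) → Matrix (Fin d) (Fin d) ℝ)
    (B : Fin (n + 1) → Matrix (Fin d) (Fin m) ℝ)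
    (x : Fin d → ℝ) (u : Fin m → ℝ)
    (P : Matrix (Fin d) (Fin d) ℝ) (hP : P.PosSemidef)
    (μ : Fin n → ℝ)
    (Sdr : Matrix (Fin n) (Fin n) ℝ) (hSdr : Sdr.PosSemidef) :
    IsGreatest
      {y : ℝ | ∃ ν' : Measure (Fin n → ℝ), IsProbabilityMeasure ν' ∧
        (∀ i, Integrable (fun w : Fin n → ℝ => w i) ν') ∧
        (∀ i j, Integrable (fun w : Fin n → ℝ => w i * w j) ν') ∧
        (∀ i, (∫ w, w i ∂ν') = μ i) ∧
        (Sdr - Matrix.of fun i j =>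
          ∫ w, (w i - μ i) * (w j - μ j) ∂ν').PosSemidef ∧
        y = ∫ w, ((Amat A w *ᵥ x + Bmat B w *ᵥ u) ⬝ᵥ
              P *ᵥ (Amat A w *ᵥ x + Bmat B w *ᵥ u)) ∂ν'}
      ((Amat A μ *ᵥ x + Bmat B μ *ᵥ u) ⬝ᵥ P *ᵥ (Amat A μ *ᵥ x + Bmat B μ *ᵥ u) +
        (AbarTail A *ᵥ x + BbarTail B *ᵥ u) ⬝ᵥ
          (Sdr ⊗ₖ P) *ᵥ (AbarTail A *ᵥ x + BbarTail B *ᵥ u)) := by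
  have hG := memLp_two_eval_multivariateGaussianPi μ Sdr
  have hG1 i := (hG i).integrable one_le_two
  have hG2 i j := (hG i).integrable_mul (hG j)
  have hGmean := integral_eval_multivariateGaussianPi μ Sdr
  refine ⟨⟨multivariateGaussianPi μ Sdr, inferInstance, hG1, hG2, hGmean, ?_, ?_⟩, ?_⟩
  · rw [← covMatrix, covMatrix_multivariateGaussianPi μ hSdr, sub_self]
    exact .zero
  · rw [integral_Amat_Bmat_dotProduct_mulVec A B x u P hG1 hG2 hGmean,
      covMatrix_multivariateGaussianPi μ hSdr]
  · rintro _ ⟨ν, _, h1, h2, hmean, hcov, rfl⟩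
    rw [integral_Amat_Bmat_dotProduct_mulVec A B x u P h1 h2 hmean]
    exact add_le_add_right (dotProduct_kronecker_mulVec_le (le_iff.mpr hcov) hP _) _

end
end

section
/- Let ν be a probability measure on ℝⁿ with finite second moments, let Q ∈ ℝ^{d×d} and R ∈ ℝ^{m×m} be symmetric positive definite, and let P ∈ ℝ^{d×d} be a symmetric positive definite solution of the Riccati equation P = Q + F(P) − H(P)ᵀ(R + G(P))⁻¹H(P). Then for every x₀ ∈ ℝ^d and every admissible policy (π_k)_{k∈ℕ}, the infinite-horizon expected cost satisfies Σ_{k=0}^∞ E[x_kᵀ Q x_k + u_kᵀ R u_k] ≥ x₀ᵀ P x₀, where the expectation is taken with respect to the infinite product measure ν^ℕ of the i.i.d. disturbance sequence. -/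
open MeasureTheory Matrix Filter
open scoped Kronecker

noncomputable section

/-- `B̄₀`: the `((n+1)d) × m` vertical stacking of `B₀, B₁, …, Bₙ`. -/
def Bbar {n d m : ℕ} (B : Fin (n + 1) → Matrix (Fin d) (Fin m) ℝ) :
    Matrix (Fin (n + 1) × Fin d) (Fin m) ℝ :=
  Matrix.of fun p j => B p.1 p.2 j

/-- `F(P) = Ā₀ᵀ(Σ̃ ⊗ P)Ā₀`. -/
def Fm {n d : ℕ} (A : Fin (n + 1) → Matrix (Fin d) (Fin d) ℝ)
    (St : Matrix (Fin (n + 1)) (Fin (n + 1)) ℝ) (P : Matrix (Fin d) (Fin d) ℝ) :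
    Matrix (Fin d) (Fin d) ℝ :=
  (Abar A)ᵀ * (St ⊗ₖ P) * Abar A

/-- `G(P) = B̄₀ᵀ(Σ̃ ⊗ P)B̄₀`. -/
def Gm {n d m : ℕ} (B : Fin (n + 1) → Matrix (Fin d) (Fin m) ℝ)
    (St : Matrix (Fin (n + 1)) (Fin (n + 1)) ℝ) (P : Matrix (Fin d) (Fin d) ℝ) :
    Matrix (Fin m) (Fin m) ℝ :=
  (Bbar B)ᵀ * (St ⊗ₖ P) * Bbar B

/-- `H(P) = B̄₀ᵀ(Σ̃ ⊗ P)Ā₀`. -/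
def Hm {n d m : ℕ} (A : Fin (n + 1) → Matrix (Fin d) (Fin d) ℝ)
    (B : Fin (n + 1) → Matrix (Fin d) (Fin m) ℝ)
    (St : Matrix (Fin (n + 1)) (Fin (n + 1)) ℝ) (P : Matrix (Fin d) (Fin d) ℝ) :
    Matrix (Fin m) (Fin d) ℝ :=
  (Bbar B)ᵀ * (St ⊗ₖ P) * Abar A

/-- The controlled trajectory `x_{k+1} = A(w_k)x_k + B(w_k)u_k`, `u_k = π_k(w₀, …, w_{k−1})`,
viewed as a function of the first `k` disturbances. -/
def traj {n d m : ℕ} (A : Fin (n + 1) → Matrix (Fin d) (Fin d) ℝ)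
    (B : Fin (n + 1) → Matrix (Fin d) (Fin m) ℝ)
    (π : (k : ℕ) → (Fin k → (Fin n → ℝ)) → (Fin m → ℝ)) (x₀ : Fin d → ℝ) :
    (k : ℕ) → (Fin k → (Fin n → ℝ)) → (Fin d → ℝ)
  | 0, _ => x₀
  | k + 1, ws =>
      Amat A (ws (Fin.last k)) *ᵥ traj A B π x₀ k (fun i => ws i.castSucc) +
        Bmat B (ws (Fin.last k)) *ᵥ π k (fun i => ws i.castSucc)

open scoped ENNReal
open Topology

/-!
Completing the square in the Riccati equation gives, for every state `x` and input `u`, the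
Bellman inequality `xᵀPx ≤ xᵀQx + uᵀRu + 𝔼_w[(A(w)x + B(w)u)ᵀ P (A(w)x + B(w)u)]`: the
expectation equals `xᵀF(P)x + 2uᵀH(P)x + uᵀG(P)u` because `Σ̃` is the second-moment matrix of
`(1, w)`. Along the trajectory this reads `Vₖ ≤ cₖ + Vₖ₊₁` for `Vₖ = 𝔼[xₖᵀPxₖ]` and the stage
costs `cₖ`, so `x₀ᵀPx₀ ≤ c₀ + ⋯ + c_{N-1} + V_N`. If the total cost is finite then `c_N → 0`, and
`V_N ≤ r c_N` for an `r` with `P ≤ rQ`, so the remainder vanishes.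
-/

section QuadraticForm

variable {ι κ η : Type*} [Fintype ι] [Fintype κ] [Fintype η]

theorem Matrix.mulVec_dotProduct_mulVec_mulVec (K : Matrix ι ι ℝ) (S : Matrix ι κ ℝ)
    (T : Matrix ι η ℝ) (y : κ → ℝ) (z : η → ℝ) :
    (S *ᵥ y) ⬝ᵥ K *ᵥ (T *ᵥ z) = y ⬝ᵥ (Sᵀ * K * T) *ᵥ z := by
  rw [← mulVec_mulVec, ← mulVec_mulVec, dotProduct_mulVec y, vecMul_transpose, dotProduct_mulVec]

theorem Matrix.IsSymm.quadForm_add_mulVec {K : Matrix ι ι ℝ} (hK : K.IsSymm)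
    (M : Matrix ι κ ℝ) (N : Matrix ι η ℝ) (x : κ → ℝ) (u : η → ℝ) :
    (M *ᵥ x + N *ᵥ u) ⬝ᵥ K *ᵥ (M *ᵥ x + N *ᵥ u)
      = x ⬝ᵥ (Mᵀ * K * M) *ᵥ x + 2 * (u ⬝ᵥ (Nᵀ * K * M) *ᵥ x)
        + u ⬝ᵥ (Nᵀ * K * N) *ᵥ u := by
  have cross : (M *ᵥ x) ⬝ᵥ K *ᵥ (N *ᵥ u) = u ⬝ᵥ (Nᵀ * K * M) *ᵥ x := by
    rw [mulVec_dotProduct_mulVec_mulVec, dotProduct_mulVec, ← mulVec_transpose, dotProduct_comm]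
    simp only [transpose_mul, transpose_transpose, hK.eq, Matrix.mul_assoc]
  rw [mulVec_add, dotProduct_add, add_dotProduct, add_dotProduct,
    mulVec_dotProduct_mulVec_mulVec K M M, mulVec_dotProduct_mulVec_mulVec K N N,
    mulVec_dotProduct_mulVec_mulVec K N M, cross]
  ring

theorem Matrix.PosDef.neg_quadForm_inv_le [DecidableEq κ] {W : Matrix κ κ ℝ} (hW : W.PosDef)
    (H : Matrix κ ι ℝ) (x : ι → ℝ) (u : κ → ℝ) :
    -(x ⬝ᵥ (Hᵀ * W⁻¹ * H) *ᵥ x) ≤ u ⬝ᵥ W *ᵥ u + 2 * (u ⬝ᵥ H *ᵥ x) := by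
  have hsymm : W.IsSymm := isHermitian_iff_isSymm.mp hW.isHermitian
  have hdet : IsUnit W.det := hW.det_pos.ne'.isUnit
  -- expand `0 ≤ vᵀ W v` at the minimiser `v = u + W⁻¹ H x` of `u ↦ uᵀ W u + 2 uᵀ H x`
  have h := hW.posSemidef.dotProduct_mulVec_nonneg ((W⁻¹ * H) *ᵥ x + (1 : Matrix κ κ ℝ) *ᵥ u)
  rw [star_trivial, hsymm.quadForm_add_mulVec, transpose_mul, transpose_nonsing_inv, hsymm.eq,
    Matrix.mul_assoc, Matrix.mul_assoc, ← Matrix.mul_assoc W⁻¹, nonsing_inv_mul _ hdet,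
    Matrix.one_mul, transpose_one, Matrix.one_mul, ← Matrix.mul_assoc W,
    mul_nonsing_inv _ hdet, Matrix.one_mul, Matrix.mul_one, ← Matrix.mul_assoc] at h
  linarith

theorem quadForm_le_of_riccati [DecidableEq κ] {P Q F : Matrix ι ι ℝ} {R G : Matrix κ κ ℝ}
    {H : Matrix κ ι ℝ} (hW : (R + G).PosDef) (hRic : P = Q + F - Hᵀ * (R + G)⁻¹ * H)
    (x : ι → ℝ) (u : κ → ℝ) :
    x ⬝ᵥ P *ᵥ x ≤ x ⬝ᵥ Q *ᵥ x + u ⬝ᵥ R *ᵥ u +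
      (x ⬝ᵥ F *ᵥ x + 2 * (u ⬝ᵥ H *ᵥ x) + u ⬝ᵥ G *ᵥ u) := by
  have h := hW.neg_quadForm_inv_le H x u
  rw [hRic]
  simp only [sub_mulVec, add_mulVec, dotProduct_add, dotProduct_sub] at h ⊢
  linarith

theorem Matrix.quadForm_smul (M : Matrix ι ι ℝ) (t : ℝ) (y : ι → ℝ) :
    (t • y) ⬝ᵥ M *ᵥ (t • y) = t ^ 2 * (y ⬝ᵥ M *ᵥ y) := by
  rw [smul_dotProduct, mulVec_smul, dotProduct_smul, smul_eq_mul, smul_eq_mul]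
  ring

theorem Matrix.continuous_quadForm (M : Matrix ι ι ℝ) :
    Continuous fun y : ι → ℝ => y ⬝ᵥ M *ᵥ y :=
  continuous_id.dotProduct (continuous_const.matrix_mulVec continuous_id)

theorem Matrix.PosDef.exists_quadForm_le_mul {Q : Matrix ι ι ℝ} (hQ : Q.PosDef)
    (P : Matrix ι ι ℝ) : ∃ r : ℝ, 0 ≤ r ∧ ∀ y, y ⬝ᵥ P *ᵥ y ≤ r * (y ⬝ᵥ Q *ᵥ y) := by
  have hQpos : ∀ y ≠ 0, 0 < y ⬝ᵥ Q *ᵥ y := fun y hy => by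
    simpa using hQ.dotProduct_mulVec_pos hy
  have hS : ∀ y ∈ Metric.sphere (0 : ι → ℝ) 1, y ≠ 0 := fun y hy =>
    ne_zero_of_mem_unit_sphere ⟨y, hy⟩
  obtain ⟨C, hC⟩ := (isCompact_sphere (0 : ι → ℝ) 1).exists_bound_of_continuousOn
    (P.continuous_quadForm.continuousOn.div Q.continuous_quadForm.continuousOn
      fun y hy => (hQpos y (hS y hy)).ne')
  refine ⟨max C 0, le_max_right _ _, fun y => ?_⟩
  rcases eq_or_ne y 0 with rfl | hy
  · simp
  set z := ‖y‖⁻¹ • y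
  have hz : z ∈ Metric.sphere (0 : ι → ℝ) 1 := by
    simp [z, norm_smul, hy]
  have hyz : y = ‖y‖ • z := by simp [z, hy]
  have hzQ := hQpos z (hS z hz)
  have hbound : z ⬝ᵥ P *ᵥ z ≤ max C 0 * (z ⬝ᵥ Q *ᵥ z) := by
    rw [← div_le_iff₀ hzQ]
    exact ((le_abs_self _).trans (hC z hz)).trans (le_max_left _ _)
  rw [hyz, P.quadForm_smul, Q.quadForm_smul, mul_left_comm]
  exact mul_le_mul_of_nonneg_left hbound (sq_nonneg _)

theorem Matrix.quadForm_kronecker (S : Matrix ι ι ℝ) (P : Matrix κ κ ℝ) (y : ι → κ → ℝ) :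
    (fun p : ι × κ => y p.1 p.2) ⬝ᵥ (S ⊗ₖ P) *ᵥ (fun p => y p.1 p.2)
      = ∑ i, ∑ j, S i j * (y i ⬝ᵥ P *ᵥ y j) := by
  simp only [mulVec, dotProduct, kroneckerMap_apply, Fintype.sum_prod_type, Finset.mul_sum]
  refine Finset.sum_congr rfl fun i _ => ?_
  rw [Finset.sum_comm]
  refine Finset.sum_congr rfl fun j _ => Finset.sum_congr rfl fun a _ =>
    Finset.sum_congr rfl fun b _ => by ring

theorem Matrix.quadForm_sum_smul (P : Matrix κ κ ℝ) (c : ι → ℝ) (y : ι → κ → ℝ) :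
    (∑ i, c i • y i) ⬝ᵥ P *ᵥ (∑ j, c j • y j)
      = ∑ i, ∑ j, c i * c j * (y i ⬝ᵥ P *ᵥ y j) := by
  simp only [mulVec_sum, sum_dotProduct, dotProduct_sum, mulVec_smul, smul_dotProduct,
    dotProduct_smul, smul_eq_mul, Finset.mul_sum]
  rw [Finset.sum_comm]
  exact Finset.sum_congr rfl fun i _ => Finset.sum_congr rfl fun j _ => by ring

end QuadraticForm

theorem ENNReal.le_tsum_of_le_add_of_le_mul {v c : ℕ → ℝ≥0∞} {r : ℝ≥0∞} (hr : r ≠ ∞)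
    (hstep : ∀ k, v k ≤ c k + v (k + 1)) (hdom : ∀ k, v k ≤ r * c k) : v 0 ≤ ∑' k, c k := by
  have hpartial : ∀ N, v 0 ≤ ∑ k ∈ Finset.range N, c k + v N := by
    intro N
    induction N with
    | zero => simp
    | succ N ih =>
      rw [Finset.sum_range_succ, add_assoc]
      exact ih.trans (add_le_add_right (hstep N) _)
  rcases eq_or_ne (∑' k, c k) ∞ with htop | htop
  · simp [htop]
  -- a finite total cost forces `c N → 0`, hence `v N → 0`
  have hlim : Tendsto (fun N => ∑ k ∈ Finset.range N, c k + r * c N) atTop (𝓝 (∑' k, c k)) := by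
    simpa using (ENNReal.tendsto_nat_tsum c).add
      (ENNReal.Tendsto.const_mul (ENNReal.tendsto_atTop_zero_of_tsum_ne_top htop) (.inr hr))
  exact ge_of_tendsto' hlim fun N => (hpartial N).trans (add_le_add_right (hdom N) _)

theorem MeasureTheory.lintegral_pi_fin_succ {α : Type*} [MeasurableSpace α] (ν : Measure α)
    [SigmaFinite ν] {k : ℕ} {f : (Fin (k + 1) → α) → ℝ≥0∞} (hf : Measurable f) :
    ∫⁻ ws, f ws ∂Measure.pi (fun _ => ν)
      = ∫⁻ ws, ∫⁻ w, f (Fin.snoc ws w) ∂ν ∂Measure.pi (fun _ => ν) := by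
  set e := (MeasurableEquiv.piFinSuccAbove (fun _ : Fin (k + 1) => α) (Fin.last k)).symm
  have hmp : MeasurePreserving e _ _ :=
    (measurePreserving_piFinSuccAbove (fun _ : Fin (k + 1) => ν) (Fin.last k)).symm
  have hfe : Measurable fun z => f (e z) := hf.comp e.measurable
  rw [← hmp.lintegral_comp hf, lintegral_prod _ hfe.aemeasurable,
    lintegral_lintegral_swap hfe.aemeasurable]
  simp [e, MeasurableEquiv.piFinSuccAbove, Fin.snocEquiv]

structure HasMeanCovariance {n : ℕ} (ν : Measure (Fin n → ℝ)) (μ : Fin n → ℝ)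
    (Sg : Matrix (Fin n) (Fin n) ℝ) : Prop where
  integrable : ∀ i, Integrable (fun w : Fin n → ℝ => w i) ν
  integrable_mul : ∀ i j, Integrable (fun w : Fin n → ℝ => w i * w j) ν
  mean_eq : ∀ i, μ i = ∫ w, w i ∂ν
  covariance_eq : ∀ i j, Sg i j = ∫ w, (w i - μ i) * (w j - μ j) ∂ν

def augment {n : ℕ} (w : Fin n → ℝ) : Fin (n + 1) → ℝ := Fin.cons 1 w

@[simp] theorem augment_zero {n : ℕ} (w : Fin n → ℝ) : augment w 0 = 1 := rfl

@[simp] theorem augment_succ {n : ℕ} (w : Fin n → ℝ) (i : Fin n) : augment w i.succ = w i := rfl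

namespace HasMeanCovariance

variable {n : ℕ} {ν : Measure (Fin n → ℝ)} {μ : Fin n → ℝ} {Sg : Matrix (Fin n) (Fin n) ℝ}

theorem integrable_augment_mul [IsFiniteMeasure ν] (h : HasMeanCovariance ν μ Sg)
    (i j : Fin (n + 1)) : Integrable (fun w => augment w i * augment w j) ν := by
  cases i using Fin.cases <;> cases j using Fin.cases
  · simp
  · simpa using h.integrable _
  · simpa using h.integrable _
  · simpa using h.integrable_mul _ _

theorem integral_apply_mul_apply [IsProbabilityMeasure ν] (h : HasMeanCovariance ν μ Sg)
    (i j : Fin n) :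
    ∫ w, w i * w j ∂ν = Sg i j + μ i * μ j := by
  have hlin : Integrable (fun w : Fin n → ℝ => μ i * w j + μ j * w i) ν :=
    ((h.integrable j).const_mul _).add ((h.integrable i).const_mul _)
  have hshift : Integrable (fun w : Fin n → ℝ => μ i * w j + μ j * w i - μ i * μ j) ν :=
    hlin.sub (integrable_const _)
  have hcov : Integrable (fun w : Fin n → ℝ => (w i - μ i) * (w j - μ j)) ν :=
    ((h.integrable_mul i j).sub hshift).congr
      (.of_forall fun w => by simp only [Pi.sub_apply]; ring)
  have hmean : ∫ w, (μ i * w j + μ j * w i - μ i * μ j) ∂ν = μ i * μ j := by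
    rw [integral_sub hlin (integrable_const _),
      integral_add ((h.integrable j).const_mul _) ((h.integrable i).const_mul _),
      integral_const_mul, integral_const_mul, ← h.mean_eq, ← h.mean_eq, integral_const,
      probReal_univ, one_smul]
    ring
  rw [h.covariance_eq, ← hmean, ← integral_add hcov hshift]
  exact integral_congr_ae (.of_forall fun w => by ring)

theorem integral_augment_mul [IsProbabilityMeasure ν] (h : HasMeanCovariance ν μ Sg)
    (i j : Fin (n + 1)) : ∫ w, augment w i * augment w j ∂ν = tildeSigma μ Sg i j := by
  cases i using Fin.cases <;> cases j using Fin.cases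
  · simp [tildeSigma]
  · simp [tildeSigma, h.mean_eq]
  · simp [tildeSigma, h.mean_eq]
  · simpa [tildeSigma] using h.integral_apply_mul_apply _ _

variable {κ : Type*} [Fintype κ]

theorem integrable_quadForm_sum_augment_smul [IsFiniteMeasure ν] (h : HasMeanCovariance ν μ Sg)
    (P : Matrix κ κ ℝ) (y : Fin (n + 1) → κ → ℝ) :
    Integrable (fun w => (∑ i, augment w i • y i) ⬝ᵥ P *ᵥ (∑ j, augment w j • y j)) ν := by
  simp only [quadForm_sum_smul]
  exact integrable_finsetSum _ fun i _ => integrable_finsetSum _ fun j _ =>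
    (h.integrable_augment_mul i j).mul_const _

theorem integral_quadForm_sum_augment_smul [IsProbabilityMeasure ν]
    (h : HasMeanCovariance ν μ Sg) (P : Matrix κ κ ℝ) (y : Fin (n + 1) → κ → ℝ) :
    ∫ w, (∑ i, augment w i • y i) ⬝ᵥ P *ᵥ (∑ j, augment w j • y j) ∂ν
      = (fun p : Fin (n + 1) × κ => y p.1 p.2) ⬝ᵥ (tildeSigma μ Sg ⊗ₖ P) *ᵥ
          (fun p => y p.1 p.2) := by
  simp only [quadForm_sum_smul, quadForm_kronecker]
  rw [integral_finsetSum _ fun i _ => integrable_finsetSum _ fun j _ =>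
    (h.integrable_augment_mul i j).mul_const _]
  refine Finset.sum_congr rfl fun i _ => ?_
  rw [integral_finsetSum _ fun j _ => (h.integrable_augment_mul i j).mul_const _]
  exact Finset.sum_congr rfl fun j _ => by rw [integral_mul_const, h.integral_augment_mul]

theorem isSymm_tildeSigma [IsProbabilityMeasure ν] (h : HasMeanCovariance ν μ Sg) :
    (tildeSigma μ Sg).IsSymm := by
  ext i j
  simp only [transpose_apply, ← h.integral_augment_mul, mul_comm]

theorem posSemidef_tildeSigma_kronecker [IsProbabilityMeasure ν] (h : HasMeanCovariance ν μ Sg)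
    {P : Matrix κ κ ℝ} (hP : P.PosSemidef) : (tildeSigma μ Sg ⊗ₖ P).PosSemidef := by
  refine .of_dotProduct_mulVec_nonneg ?_ fun z => ?_
  · rw [isHermitian_iff_isSymm, IsSymm, ← kroneckerMap_transpose, h.isSymm_tildeSigma.eq,
      (isHermitian_iff_isSymm.mp hP.isHermitian).eq]
  · rw [star_trivial]
    -- `zᵀ (Σ̃ ⊗ P) z` is the mean of a quadratic form in `P`
    have hz := h.integral_quadForm_sum_augment_smul P fun i a => z (i, a)
    simp only [Prod.mk.eta] at hz
    rw [← hz]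
    exact integral_nonneg fun w => by simpa using hP.dotProduct_mulVec_nonneg _

end HasMeanCovariance

section LinearSystem

variable {n d m : ℕ} (A : Fin (n + 1) → Matrix (Fin d) (Fin d) ℝ)
  (B : Fin (n + 1) → Matrix (Fin d) (Fin m) ℝ)

theorem amat_mulVec_add_bmat_mulVec (w : Fin n → ℝ) (x : Fin d → ℝ) (u : Fin m → ℝ) :
    Amat A w *ᵥ x + Bmat B w *ᵥ u = ∑ i, augment w i • (A i *ᵥ x + B i *ᵥ u) := by
  simp [Amat, Bmat, Fin.sum_univ_succ, add_mulVec, sum_mulVec, smul_mulVec, smul_add,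
    Finset.sum_add_distrib]

theorem abar_mulVec_add_bbar_mulVec (x : Fin d → ℝ) (u : Fin m → ℝ) :
    (fun p : Fin (n + 1) × Fin d => (A p.1 *ᵥ x + B p.1 *ᵥ u) p.2)
      = Abar A *ᵥ x + Bbar B *ᵥ u := by
  ext p
  simp [Abar, Bbar, mulVec, dotProduct]

variable {ν : Measure (Fin n → ℝ)} [IsProbabilityMeasure ν] {μ : Fin n → ℝ}
  {Sg : Matrix (Fin n) (Fin n) ℝ} {P : Matrix (Fin d) (Fin d) ℝ}

theorem HasMeanCovariance.integrable_quadForm_next (h : HasMeanCovariance ν μ Sg)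
    (x : Fin d → ℝ) (u : Fin m → ℝ) :
    Integrable (fun w => (Amat A w *ᵥ x + Bmat B w *ᵥ u) ⬝ᵥ P *ᵥ
      (Amat A w *ᵥ x + Bmat B w *ᵥ u)) ν := by
  simpa only [amat_mulVec_add_bmat_mulVec] using h.integrable_quadForm_sum_augment_smul P _

theorem HasMeanCovariance.integral_quadForm_next (h : HasMeanCovariance ν μ Sg)
    (hP : P.PosSemidef) (x : Fin d → ℝ) (u : Fin m → ℝ) :
    ∫ w, (Amat A w *ᵥ x + Bmat B w *ᵥ u) ⬝ᵥ P *ᵥ (Amat A w *ᵥ x + Bmat B w *ᵥ u) ∂ν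
      = x ⬝ᵥ Fm A (tildeSigma μ Sg) P *ᵥ x + 2 * (u ⬝ᵥ Hm A B (tildeSigma μ Sg) P *ᵥ x)
        + u ⬝ᵥ Gm B (tildeSigma μ Sg) P *ᵥ u := by
  have hK := h.posSemidef_tildeSigma_kronecker hP
  simp only [amat_mulVec_add_bmat_mulVec]
  rw [h.integral_quadForm_sum_augment_smul, abar_mulVec_add_bbar_mulVec,
    (isHermitian_iff_isSymm.mp hK.isHermitian).quadForm_add_mulVec, Fm, Hm, Gm]

theorem HasMeanCovariance.posSemidef_gm (h : HasMeanCovariance ν μ Sg) (hP : P.PosSemidef) :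
    (Gm B (tildeSigma μ Sg) P).PosSemidef := by
  simpa [Gm] using (h.posSemidef_tildeSigma_kronecker hP).conjTranspose_mul_mul_same (Bbar B)

theorem HasMeanCovariance.ofReal_quadForm_le_of_riccati {Q : Matrix (Fin d) (Fin d) ℝ}
    {R : Matrix (Fin m) (Fin m) ℝ} (h : HasMeanCovariance ν μ Sg) (hR : R.PosDef)
    (hP : P.PosSemidef)
    (hRic : P = Q + Fm A (tildeSigma μ Sg) P -
      (Hm A B (tildeSigma μ Sg) P)ᵀ * (R + Gm B (tildeSigma μ Sg) P)⁻¹ *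
        Hm A B (tildeSigma μ Sg) P)
    (x : Fin d → ℝ) (u : Fin m → ℝ) :
    ENNReal.ofReal (x ⬝ᵥ P *ᵥ x) ≤ ENNReal.ofReal (x ⬝ᵥ Q *ᵥ x + u ⬝ᵥ R *ᵥ u) +
      ∫⁻ w, ENNReal.ofReal ((Amat A w *ᵥ x + Bmat B w *ᵥ u) ⬝ᵥ P *ᵥ
        (Amat A w *ᵥ x + Bmat B w *ᵥ u)) ∂ν := by
  rw [← ofReal_integral_eq_lintegral_ofReal (h.integrable_quadForm_next A B x u)
    (.of_forall fun w => by
      simpa only [Pi.zero_apply, star_trivial] using hP.dotProduct_mulVec_nonneg _),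
    h.integral_quadForm_next A B hP x u]
  refine (ENNReal.ofReal_le_ofReal ?_).trans ENNReal.ofReal_add_le
  exact quadForm_le_of_riccati (hR.add_posSemidef (h.posSemidef_gm B hP)) hRic x u

end LinearSystem

section Trajectory

variable {n d m : ℕ} (A : Fin (n + 1) → Matrix (Fin d) (Fin d) ℝ)
  (B : Fin (n + 1) → Matrix (Fin d) (Fin m) ℝ)
  (π : (k : ℕ) → (Fin k → (Fin n → ℝ)) → (Fin m → ℝ)) (x₀ : Fin d → ℝ)

theorem continuous_amat_mulVec_add_bmat_mulVec :
    Continuous fun p : (Fin n → ℝ) × (Fin d → ℝ) × (Fin m → ℝ) =>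
      Amat A p.1 *ᵥ p.2.1 + Bmat B p.1 *ᵥ p.2.2 := by
  unfold Amat Bmat; fun_prop

theorem traj_snoc (k : ℕ) (ws : Fin k → Fin n → ℝ) (w : Fin n → ℝ) :
    traj A B π x₀ (k + 1) (Fin.snoc ws w)
      = Amat A w *ᵥ traj A B π x₀ k ws + Bmat B w *ᵥ π k ws := by
  simp [traj]

theorem measurable_traj (hπ : ∀ k, Measurable (π k)) (k : ℕ) :
    Measurable (traj A B π x₀ k) := by
  induction k with
  | zero => exact measurable_const
  | succ k ih =>
    have hinit : Measurable fun ws : Fin (k + 1) → Fin n → ℝ => fun i : Fin k => ws i.castSucc :=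
      measurable_pi_lambda _ fun i => measurable_pi_apply _
    have hnext := (continuous_amat_mulVec_add_bmat_mulVec A B).measurable.comp
      ((measurable_pi_apply (Fin.last k)).prodMk ((ih.comp hinit).prodMk ((hπ k).comp hinit)))
    convert hnext using 1
    funext ws
    simp only [traj, Function.comp_apply]

end Trajectory

section Cost

variable {n d m : ℕ} (ν : Measure (Fin n → ℝ)) (A : Fin (n + 1) → Matrix (Fin d) (Fin d) ℝ)
  (B : Fin (n + 1) → Matrix (Fin d) (Fin m) ℝ)
  (π : (k : ℕ) → (Fin k → (Fin n → ℝ)) → (Fin m → ℝ)) (x₀ : Fin d → ℝ)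

def expectedQuadForm (M : Matrix (Fin d) (Fin d) ℝ) (k : ℕ) : ℝ≥0∞ :=
  ∫⁻ ws, ENNReal.ofReal (traj A B π x₀ k ws ⬝ᵥ M *ᵥ traj A B π x₀ k ws)
    ∂Measure.pi fun _ : Fin k => ν

def stageCost (Q : Matrix (Fin d) (Fin d) ℝ) (R : Matrix (Fin m) (Fin m) ℝ) (k : ℕ) : ℝ≥0∞ :=
  ∫⁻ ws, ENNReal.ofReal (traj A B π x₀ k ws ⬝ᵥ Q *ᵥ traj A B π x₀ k ws + π k ws ⬝ᵥ R *ᵥ π k ws)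
    ∂Measure.pi fun _ : Fin k => ν

variable {ν A B π x₀} {P Q : Matrix (Fin d) (Fin d) ℝ} {R : Matrix (Fin m) (Fin m) ℝ}

theorem expectedQuadForm_zero :
    expectedQuadForm ν A B π x₀ P 0 = ENNReal.ofReal (x₀ ⬝ᵥ P *ᵥ x₀) := by
  simp [expectedQuadForm, traj]

theorem expectedQuadForm_le_mul_stageCost {r : ℝ} (hr : 0 ≤ r)
    (hPQ : ∀ y, y ⬝ᵥ P *ᵥ y ≤ r * (y ⬝ᵥ Q *ᵥ y)) (hR : R.PosSemidef) (k : ℕ) :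
    expectedQuadForm ν A B π x₀ P k ≤ ENNReal.ofReal r * stageCost ν A B π x₀ Q R k := by
  rw [expectedQuadForm, stageCost, ← lintegral_const_mul' _ _ ENNReal.ofReal_ne_top]
  refine lintegral_mono fun ws => ?_
  rw [← ENNReal.ofReal_mul hr]
  refine ENNReal.ofReal_le_ofReal ((hPQ _).trans (mul_le_mul_of_nonneg_left ?_ hr))
  exact le_add_of_nonneg_right (by simpa only [star_trivial] using hR.dotProduct_mulVec_nonneg _)

theorem expectedQuadForm_le_stageCost_add_succ [SigmaFinite ν] (hπ : ∀ k, Measurable (π k))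
    (hBellman : ∀ x u, ENNReal.ofReal (x ⬝ᵥ P *ᵥ x) ≤
      ENNReal.ofReal (x ⬝ᵥ Q *ᵥ x + u ⬝ᵥ R *ᵥ u) +
        ∫⁻ w, ENNReal.ofReal ((Amat A w *ᵥ x + Bmat B w *ᵥ u) ⬝ᵥ P *ᵥ
          (Amat A w *ᵥ x + Bmat B w *ᵥ u)) ∂ν)
    (k : ℕ) :
    expectedQuadForm ν A B π x₀ P k
      ≤ stageCost ν A B π x₀ Q R k + expectedQuadForm ν A B π x₀ P (k + 1) := by
  have hX := measurable_traj A B π x₀ hπ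
  have hstage : Measurable fun ws => ENNReal.ofReal
      (traj A B π x₀ k ws ⬝ᵥ Q *ᵥ traj A B π x₀ k ws + π k ws ⬝ᵥ R *ᵥ π k ws) :=
    ((Q.continuous_quadForm.measurable.comp (hX k)).add
      (R.continuous_quadForm.measurable.comp (hπ k))).ennreal_ofReal
  have hnext : Measurable fun ws => ENNReal.ofReal
      (traj A B π x₀ (k + 1) ws ⬝ᵥ P *ᵥ traj A B π x₀ (k + 1) ws) :=
    (P.continuous_quadForm.measurable.comp (hX (k + 1))).ennreal_ofReal
  rw [expectedQuadForm, expectedQuadForm, lintegral_pi_fin_succ ν hnext, stageCost,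
    ← lintegral_add_left hstage]
  simp only [traj_snoc]
  exact lintegral_mono fun ws => hBellman _ _

end Cost

/-- `xₖ` and `uₖ` depend only on `w₀, …, w_{k−1}`, so the `k`-th expected stage cost is an
integral over `ν^k`; the total cost is a sum in `ℝ≥0∞`, possibly `∞`. -/
theorem stmt14 {n d m : ℕ}
    (A : Fin (n + 1) → Matrix (Fin d) (Fin d) ℝ)
    (B : Fin (n + 1) → Matrix (Fin d) (Fin m) ℝ)
    (ν : Measure (Fin n → ℝ)) [IsProbabilityMeasure ν]
    (hint1 : ∀ i, Integrable (fun w : Fin n → ℝ => w i) ν)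
    (hint2 : ∀ i j, Integrable (fun w : Fin n → ℝ => w i * w j) ν)
    (μ : Fin n → ℝ) (hμ : ∀ i, μ i = ∫ w, w i ∂ν)
    (Sg : Matrix (Fin n) (Fin n) ℝ)
    (hSg : ∀ i j, Sg i j = ∫ w, (w i - μ i) * (w j - μ j) ∂ν)
    (Q : Matrix (Fin d) (Fin d) ℝ) (hQ : Q.PosDef)
    (R : Matrix (Fin m) (Fin m) ℝ) (hR : R.PosDef)
    (P : Matrix (Fin d) (Fin d) ℝ) (hP : P.PosDef)
    (hRic : P = Q + Fm A (tildeSigma μ Sg) P -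
      (Hm A B (tildeSigma μ Sg) P)ᵀ * (R + Gm B (tildeSigma μ Sg) P)⁻¹ *
        Hm A B (tildeSigma μ Sg) P)
    (x₀ : Fin d → ℝ)
    (π : (k : ℕ) → (Fin k → (Fin n → ℝ)) → (Fin m → ℝ))
    (hπ : ∀ k, Measurable (π k)) :
    ENNReal.ofReal (x₀ ⬝ᵥ P *ᵥ x₀) ≤
      ∑' k : ℕ, ∫⁻ ws, ENNReal.ofReal
          (traj A B π x₀ k ws ⬝ᵥ Q *ᵥ traj A B π x₀ k ws +
            π k ws ⬝ᵥ R *ᵥ π k ws)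
        ∂(Measure.pi fun _ : Fin k => ν) := by
  have hν : HasMeanCovariance ν μ Sg := ⟨hint1, hint2, hμ, hSg⟩
  obtain ⟨r, hr, hPQ⟩ := hQ.exists_quadForm_le_mul P
  rw [← expectedQuadForm_zero]
  exact ENNReal.le_tsum_of_le_add_of_le_mul ENNReal.ofReal_ne_top
    (expectedQuadForm_le_stageCost_add_succ hπ
      (hν.ofReal_quadForm_le_of_riccati A B hR hP.posSemidef hRic))
    (expectedQuadForm_le_mul_stageCost hr hPQ hR.posSemidef)

end
end

section
/- Let L ∈ ℝ^{p×p} and S ∈ ℝ^{m×m} be symmetric positive definite, H₁, …, Hₙ ∈ ℝ^{p×m}, and ρ ≥ 0, and suppose ρ² Σ_{i=1}^n Hᵢᵀ L⁻¹ Hᵢ ⪯ S. Then for every ζ ∈ ℝⁿ with ‖ζ‖₂ ≤ ρ and all vectors a ∈ ℝ^p, b ∈ ℝ^m, one has Σ_{i=1}^n ζᵢ · aᵀ Hᵢ b ≤ √(aᵀ L a) · √(bᵀ S b). -/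
/-!
Put `cᵢ = aᵀHᵢb`. Cauchy–Schwarz for the inner product `L⁻¹`, applied to `La` and `Hᵢb`, gives
`cᵢ² ≤ (aᵀLa)(bᵀHᵢᵀL⁻¹Hᵢb)`; summing and using the majorization,
`ρ² Σ cᵢ² ≤ (aᵀLa)(bᵀSb)`. Cauchy–Schwarz in `ℝⁿ` then bounds `(Σ ζᵢcᵢ)²` by `‖ζ‖² Σ cᵢ²`.
-/

open Matrix

namespace Matrix

variable {ι κ ν : Type*} [Fintype ι] [Fintype κ]

theorem PosSemidef.sq_dotProduct_mulVec_le {M : Matrix ι ι ℝ} (hM : M.PosSemidef) (x y : ι → ℝ) :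
    (x ⬝ᵥ M *ᵥ y) ^ 2 ≤ (x ⬝ᵥ M *ᵥ x) * (y ⬝ᵥ M *ᵥ y) := by
  let _ := M.toSeminormedAddCommGroup hM
  let _ := M.toInnerProductSpace hM
  have hinner : ∀ u v : ι → ℝ, inner ℝ u v = u ⬝ᵥ M *ᵥ v := fun u v => by
    change (M *ᵥ v) ⬝ᵥ star u = _
    rw [star_trivial, dotProduct_comm]
  simpa only [hinner, sq] using real_inner_mul_inner_self_le x y

theorem PosSemidef.dotProduct_mulVec_le {S T : Matrix ι ι ℝ} (h : (S - T).PosSemidef)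
    (x : ι → ℝ) : x ⬝ᵥ T *ᵥ x ≤ x ⬝ᵥ S *ᵥ x := by
  have := h.dotProduct_mulVec_nonneg x
  rw [star_trivial, sub_mulVec, dotProduct_sub] at this
  linarith

variable [DecidableEq ι]

theorem PosDef.sq_dotProduct_le {L : Matrix ι ι ℝ} (hL : L.PosDef) (a c : ι → ℝ) :
    (a ⬝ᵥ c) ^ 2 ≤ (a ⬝ᵥ L *ᵥ a) * (c ⬝ᵥ L⁻¹ *ᵥ c) := by
  have hLL : L * L⁻¹ = 1 := mul_nonsing_inv L (isUnit_iff_ne_zero.mpr hL.det_pos.ne')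
  have hLsymm : Lᵀ = L := by simpa using hL.isHermitian.eq
  have hcancel : ∀ v, L *ᵥ a ⬝ᵥ L⁻¹ *ᵥ v = a ⬝ᵥ v := fun v => by
    rw [← hLsymm, mulVec_transpose, ← dotProduct_mulVec, hLsymm, mulVec_mulVec, hLL, one_mulVec]
  have h := hL.inv.posSemidef.sq_dotProduct_mulVec_le (L *ᵥ a) c
  rwa [hcancel, hcancel] at h

theorem PosDef.sq_dotProduct_mulVec_le {L : Matrix ι ι ℝ} (hL : L.PosDef) (H : Matrix ι κ ℝ)
    (a : ι → ℝ) (b : κ → ℝ) :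
    (a ⬝ᵥ H *ᵥ b) ^ 2 ≤ (a ⬝ᵥ L *ᵥ a) * (b ⬝ᵥ (Hᵀ * L⁻¹ * H) *ᵥ b) := by
  rw [← mulVec_mulVec, ← mulVec_mulVec, dotProduct_mulVec b, vecMul_transpose]
  exact hL.sq_dotProduct_le a (H *ᵥ b)

theorem PosDef.sq_sum_mul_dotProduct_mulVec_le {L : Matrix ι ι ℝ} (hL : L.PosDef)
    (s : Finset ν) (H : ν → Matrix ι κ ℝ) (ζ : ν → ℝ) (a : ι → ℝ) (b : κ → ℝ) :
    (∑ i ∈ s, ζ i * (a ⬝ᵥ H i *ᵥ b)) ^ 2 ≤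
      (∑ i ∈ s, ζ i ^ 2) * (a ⬝ᵥ L *ᵥ a) * (b ⬝ᵥ (∑ i ∈ s, (H i)ᵀ * L⁻¹ * H i) *ᵥ b) := by
  calc (∑ i ∈ s, ζ i * (a ⬝ᵥ H i *ᵥ b)) ^ 2
      ≤ (∑ i ∈ s, ζ i ^ 2) * ∑ i ∈ s, (a ⬝ᵥ H i *ᵥ b) ^ 2 := Finset.sum_mul_sq_le_sq_mul_sq _ _ _
    _ ≤ (∑ i ∈ s, ζ i ^ 2) * ∑ i ∈ s, (a ⬝ᵥ L *ᵥ a) * (b ⬝ᵥ ((H i)ᵀ * L⁻¹ * H i) *ᵥ b) := by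
      gcongr with i
      exact hL.sq_dotProduct_mulVec_le (H i) a b
    _ = _ := by
      rw [sum_mulVec, dotProduct_sum, ← Finset.mul_sum, mul_assoc]

end Matrix

theorem stmt17_general {p m n : ℕ}
    (L : Matrix (Fin p) (Fin p) ℝ) (hL : L.PosDef)
    (S : Matrix (Fin m) (Fin m) ℝ)
    (H : Fin n → Matrix (Fin p) (Fin m) ℝ) (ρ : ℝ)
    (hmaj : (S - ρ ^ 2 • ∑ i : Fin n, (H i)ᵀ * L⁻¹ * H i).PosSemidef)
    (ζ : Fin n → ℝ) (hζ : Real.sqrt (∑ i, ζ i ^ 2) ≤ ρ)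
    (a : Fin p → ℝ) (b : Fin m → ℝ) :
    ∑ i, ζ i * (a ⬝ᵥ (H i) *ᵥ b) ≤
      Real.sqrt (a ⬝ᵥ L *ᵥ a) * Real.sqrt (b ⬝ᵥ S *ᵥ b) := by
  set T := ∑ i, (H i)ᵀ * L⁻¹ * H i
  have hLa : 0 ≤ a ⬝ᵥ L *ᵥ a := by simpa using hL.posSemidef.dotProduct_mulVec_nonneg a
  have hTb : 0 ≤ b ⬝ᵥ T *ᵥ b := by
    simpa using (posSemidef_sum _ fun i _ =>
      hL.inv.posSemidef.conjTranspose_mul_mul_same (H i)).dotProduct_mulVec_nonneg b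
  have hζρ : ∑ i, ζ i ^ 2 ≤ ρ ^ 2 := (Real.sqrt_le_iff.mp hζ).2
  have hSb : ρ ^ 2 * (b ⬝ᵥ T *ᵥ b) ≤ b ⬝ᵥ S *ᵥ b := by
    simpa only [smul_mulVec, dotProduct_smul, smul_eq_mul] using hmaj.dotProduct_mulVec_le b
  have hsq : (∑ i, ζ i * (a ⬝ᵥ H i *ᵥ b)) ^ 2 ≤ (a ⬝ᵥ L *ᵥ a) * (b ⬝ᵥ S *ᵥ b) :=
    calc _ ≤ (∑ i, ζ i ^ 2) * (a ⬝ᵥ L *ᵥ a) * (b ⬝ᵥ T *ᵥ b) :=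
          hL.sq_sum_mul_dotProduct_mulVec_le _ H ζ a b
      _ ≤ ρ ^ 2 * (a ⬝ᵥ L *ᵥ a) * (b ⬝ᵥ T *ᵥ b) := by gcongr
      _ = (a ⬝ᵥ L *ᵥ a) * (ρ ^ 2 * (b ⬝ᵥ T *ᵥ b)) := by ring
      _ ≤ (a ⬝ᵥ L *ᵥ a) * (b ⬝ᵥ S *ᵥ b) := mul_le_mul_of_nonneg_left hSb hLa
  rw [← Real.sqrt_mul hLa]
  exact (le_abs_self _).trans (Real.abs_le_sqrt hsq)

/-- If `ρ² Σᵢ Hᵢᵀ L⁻¹ Hᵢ ⪯ S` with `L, S` symmetric positive definite and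
`ρ ≥ 0`, then for every `ζ` with `‖ζ‖₂ ≤ ρ` and all vectors `a, b`,
`Σᵢ ζᵢ · aᵀHᵢb ≤ √(aᵀLa) · √(bᵀSb)`. -/
theorem stmt17 {p m n : ℕ}
    (L : Matrix (Fin p) (Fin p) ℝ) (hL : L.PosDef)
    (S : Matrix (Fin m) (Fin m) ℝ) (hS : S.PosDef)
    (H : Fin n → Matrix (Fin p) (Fin m) ℝ) (ρ : ℝ) (hρ : 0 ≤ ρ)
    (hmaj : (S - ρ ^ 2 • ∑ i : Fin n, (H i)ᵀ * L⁻¹ * H i).PosSemidef)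
    (ζ : Fin n → ℝ) (hζ : Real.sqrt (∑ i, ζ i ^ 2) ≤ ρ)
    (a : Fin p → ℝ) (b : Fin m → ℝ) :
    ∑ i, ζ i * (a ⬝ᵥ (H i) *ᵥ b) ≤
      Real.sqrt (a ⬝ᵥ L *ᵥ a) * Real.sqrt (b ⬝ᵥ S *ᵥ b) :=
  stmt17_general L hL S H ρ hmaj ζ hζ a b
end
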